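/- For every integer t ≥ 1, ζ(2t) = 1 + Σ_{n=t}^∞ Σ_{m=2}^∞ ζ(2n+1, m) + Σ_{n=t}^∞ Σ_{m=2}^∞ ζ(2n+2, m). -/

import Mathlib

/-!
For `x > 1` the geometric series gives `∑_{q ≥ 1} x^{-(s+q)} = x^{-s} / (x - 1)`. Summing this over
`x = k + m` with `k ≥ 0`, `m ≥ 2`, the value `x = j + 2` occurs `j + 1 = x - 1` times, so
`∑_{q ≥ 1} ∑_{m ≥ 2} ζ(s + q, m) = ∑_{j ≥ 0} (j + 2)^{-s} = ζ(s) - 1`.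
Splitting `q` into odd and even values gives the identity among nonnegative extended reals; for
`s = 2t > 1` the left side is finite, hence so is every series on the right, and it holds in `ℝ`.
-/

/-- Riemann zeta as a series (valid for s > 1). -/
noncomputable def zetaR (s : ℝ) : ℝ := ∑' n : ℕ, ((n : ℝ) + 1) ^ (-s)

/-- Hurwitz zeta function (series definition, valid for s > 1, q > 0). -/
noncomputable def hurwitzZetaSeries (s q : ℝ) : ℝ := ∑' k : ℕ, ((k : ℝ) + q) ^ (-s)

open scoped ENNReal

lemma hasSum_rpow_neg_add_succ {x : ℝ} (hx : 1 < x) (s : ℝ) :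
    HasSum (fun q : ℕ => x ^ (-(s + (q + 1)))) (x ^ (-s) / (x - 1)) := by
  have hx0 : 0 < x := zero_lt_one.trans hx
  have hterm : ∀ q : ℕ, x ^ (-(s + (q + 1))) = x ^ (-s) * x⁻¹ * x⁻¹ ^ q := fun q => by
    rw [show -(s + (q + 1)) = -s + -1 + -(q : ℝ) by ring, Real.rpow_add hx0, Real.rpow_add hx0,
      Real.rpow_neg_one, Real.rpow_neg hx0.le (q : ℝ), Real.rpow_natCast, inv_pow]
  have hsum : x ^ (-s) * x⁻¹ * (1 - x⁻¹)⁻¹ = x ^ (-s) / (x - 1) := by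
    field_simp [(sub_pos.2 hx).ne']
  simpa only [hterm, hsum] using
    (hasSum_geometric_of_lt_one (inv_nonneg.2 hx0.le) (inv_lt_one_of_one_lt₀ hx)).mul_left
      (x ^ (-s) * x⁻¹)

lemma ENNReal.tsum_tsum_nat_add (f : ℕ → ℝ≥0∞) :
    ∑' m, ∑' k, f (m + k) = ∑' n, (n + 1) * f n := by
  rw [← ENNReal.tsum_prod,
    ← Finset.HasAntidiagonal.sigmaAntidiagonalEquivProd.tsum_eq (fun p : ℕ × ℕ => f (p.1 + p.2)),
    ENNReal.tsum_sigma']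
  refine tsum_congr fun n => ?_
  rw [tsum_fintype, Finset.univ_eq_attach]
  simp only [Finset.HasAntidiagonal.sigmaAntidiagonalEquivProd_apply]
  rw [Finset.sum_attach _ (fun p : ℕ × ℕ => f (p.1 + p.2)),
    Finset.sum_congr rfl fun p hp => by rw [Finset.HasAntidiagonal.mem_antidiagonal.mp hp],
    Finset.sum_const, Finset.Nat.card_antidiagonal, nsmul_eq_mul, Nat.cast_succ]

lemma tsum_eq_toReal_tsum_ofReal {α : Type*} {f : α → ℝ} (hf : ∀ a, 0 ≤ f a) :
    ∑' a, f a = (∑' a, ENNReal.ofReal (f a)).toReal := by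
  rw [ENNReal.tsum_toReal_eq fun _ => ENNReal.ofReal_ne_top]
  exact tsum_congr fun a => (ENNReal.toReal_ofReal (hf a)).symm

lemma ENNReal.toReal_tsum_tsum {α β : Type*} {f : α → β → ℝ≥0∞}
    (hf : ∑' a, ∑' b, f a b ≠ ∞) :
    (∑' a, ∑' b, f a b).toReal = ∑' a, ∑' b, (f a b).toReal := by
  have hrow := ENNReal.ne_top_of_tsum_ne_top hf
  rw [ENNReal.tsum_toReal_eq hrow]
  exact tsum_congr fun a => ENNReal.tsum_toReal_eq (ENNReal.ne_top_of_tsum_ne_top (hrow a))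

/-- In `ℝ≥0∞` all the rearrangements below are unconditional; `toReal` recovers the real series,
also when it diverges, since both sides are then `0`. -/
noncomputable def hurwitzZetaENNReal (s q : ℝ) : ℝ≥0∞ :=
  ∑' k : ℕ, ENNReal.ofReal (((k : ℝ) + q) ^ (-s))

lemma hurwitzZetaSeries_eq_toReal (s : ℝ) {q : ℝ} (hq : 0 ≤ q) :
    hurwitzZetaSeries s q = (hurwitzZetaENNReal s q).toReal :=
  tsum_eq_toReal_tsum_ofReal fun _ => by positivity

lemma hurwitzZetaENNReal_ne_top {s q : ℝ} (hs : 1 < s) (hq : 0 ≤ q) :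
    hurwitzZetaENNReal s q ≠ ∞ := by
  refine Summable.tsum_ofReal_ne_top (((Real.summable_one_div_nat_add_rpow q s).2 hs).congr ?_)
  intro k
  rw [abs_of_nonneg (by positivity), one_div, Real.rpow_neg (by positivity)]

lemma hurwitzZetaENNReal_eq_add_succ (s q : ℝ) :
    hurwitzZetaENNReal s q = ENNReal.ofReal (q ^ (-s)) + hurwitzZetaENNReal s (q + 1) := by
  rw [hurwitzZetaENNReal, tsum_eq_zero_add' ENNReal.summable, hurwitzZetaENNReal]
  simp only [Nat.cast_zero, zero_add, Nat.cast_succ, add_assoc, add_comm 1 q]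

lemma tsum_ofReal_rpow_neg_add_succ {x : ℝ} (hx : 1 < x) (s : ℝ) :
    ∑' q : ℕ, ENNReal.ofReal (x ^ (-(s + (q + 1)))) = ENNReal.ofReal (x ^ (-s) / (x - 1)) := by
  have hsum := hasSum_rpow_neg_add_succ hx s
  rw [← ENNReal.ofReal_tsum_of_nonneg (fun q => by positivity) hsum.summable, hsum.tsum_eq]

lemma tsum_tsum_hurwitzZetaENNReal_add_succ (s : ℝ) :
    ∑' q : ℕ, ∑' m : ℕ, hurwitzZetaENNReal (s + (q + 1)) (m + 2) = hurwitzZetaENNReal s 2 := by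
  have hdiag : ∀ m k : ℕ, (k : ℝ) + (m + 2) = ((m + k : ℕ) : ℝ) + 2 := fun m k => by
    push_cast
    ring
  calc ∑' q : ℕ, ∑' m : ℕ, hurwitzZetaENNReal (s + (q + 1)) (m + 2)
      = ∑' m : ℕ, ∑' k : ℕ, ∑' q : ℕ,
          ENNReal.ofReal (((k : ℝ) + (m + 2)) ^ (-(s + (q + 1)))) := by
        simp only [hurwitzZetaENNReal]
        rw [ENNReal.tsum_comm]
        exact tsum_congr fun m => ENNReal.tsum_comm
    _ = ∑' m : ℕ, ∑' k : ℕ,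
          ENNReal.ofReal ((((m + k : ℕ) : ℝ) + 2) ^ (-s) / (((m + k : ℕ) : ℝ) + 1)) := by
        refine tsum_congr fun m => tsum_congr fun k => ?_
        rw [hdiag, tsum_ofReal_rpow_neg_add_succ
          (lt_add_of_nonneg_of_lt (Nat.cast_nonneg _) one_lt_two)]
        congr 2
        ring
    _ = ∑' n : ℕ, ENNReal.ofReal (((n : ℝ) + 2) ^ (-s)) := by
        rw [ENNReal.tsum_tsum_nat_add fun n => ENNReal.ofReal (((n : ℝ) + 2) ^ (-s) / ((n : ℝ) + 1))]
        refine tsum_congr fun n => ?_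
        have hcast : (n : ℝ≥0∞) + 1 = ENNReal.ofReal ((n : ℝ) + 1) := by
          rw [ENNReal.ofReal_add n.cast_nonneg zero_le_one, ENNReal.ofReal_natCast,
            ENNReal.ofReal_one]
        rw [hcast, ← ENNReal.ofReal_mul (by positivity), mul_div_cancel₀ _ (by positivity)]

lemma hurwitzZetaENNReal_one_eq_split (s : ℝ) :
    hurwitzZetaENNReal s 1
      = 1 + (∑' n : ℕ, ∑' m : ℕ, hurwitzZetaENNReal (s + (2 * n + 1)) (m + 2))
          + ∑' n : ℕ, ∑' m : ℕ, hurwitzZetaENNReal (s + (2 * n + 2)) (m + 2) := by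
  have hsplit := tsum_even_add_odd
    (f := fun q : ℕ => ∑' m : ℕ, hurwitzZetaENNReal (s + (q + 1)) (m + 2))
    ENNReal.summable ENNReal.summable
  push_cast at hsplit
  rw [hurwitzZetaENNReal_eq_add_succ, Real.one_rpow, ENNReal.ofReal_one, one_add_one_eq_two,
    add_assoc, ← tsum_tsum_hurwitzZetaENNReal_add_succ, ← hsplit]
  simp only [add_assoc, one_add_one_eq_two]

/-- For t ≥ 1, ζ(2t) = 1 + Σ_{n≥t} Σ_{m≥2} ζ(2n+1,m) + Σ_{n≥t} Σ_{m≥2} ζ(2n+2,m). -/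
theorem zeta_even_split (t : ℕ) (ht : 1 ≤ t) :
    zetaR (2 * (t : ℝ))
      = 1 + (∑' n : ℕ, ∑' m : ℕ,
              hurwitzZetaSeries (2 * ((n : ℝ) + t) + 1) ((m : ℝ) + 2))
          + ∑' n : ℕ, ∑' m : ℕ,
              hurwitzZetaSeries (2 * ((n : ℝ) + t) + 2) ((m : ℝ) + 2) := by
  have hs : (1 : ℝ) < 2 * t := by
    have : (1 : ℝ) ≤ t := by exact_mod_cast ht
    linarith
  have hfin := hurwitzZetaENNReal_ne_top hs zero_le_one
  rw [hurwitzZetaENNReal_one_eq_split, ENNReal.add_ne_top, ENNReal.add_ne_top] at hfin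
  obtain ⟨⟨-, hodd⟩, heven⟩ := hfin
  have hexp : ∀ (n : ℕ) (i : ℝ), 2 * ((n : ℝ) + t) + i = 2 * t + (2 * n + i) := fun n i => by
    ring
  have hreal : ∀ (s : ℝ) (m : ℕ),
      hurwitzZetaSeries s (m + 2) = (hurwitzZetaENNReal s (m + 2)).toReal := fun s m =>
    hurwitzZetaSeries_eq_toReal s (by positivity)
  simp only [hexp, hreal]
  rw [show zetaR (2 * t) = hurwitzZetaSeries (2 * t) 1 from rfl,
    hurwitzZetaSeries_eq_toReal _ zero_le_one, hurwitzZetaENNReal_one_eq_split,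
    ENNReal.toReal_add (ENNReal.add_ne_top.2 ⟨ENNReal.one_ne_top, hodd⟩) heven,
    ENNReal.toReal_add ENNReal.one_ne_top hodd, ENNReal.toReal_one,
    ENNReal.toReal_tsum_tsum hodd, ENNReal.toReal_tsum_tsum heven]
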